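/- If n ≥ 2 and a league outcome with n teams is tied with common score 2n−1, then every team has exactly 1 victory, 1 defeat, and 2n−4 draws among its 2(n−1) matches. -/

import Mathlib

/-!
A team with `w` wins, `d` draws and `l` losses has `3w + d = 2n - 1` points from
`w + d + l = 2n - 2` matches, so `l = 2w - 1`; in particular it wins at least once.
Wins and losses balance over the league, so `∑ w = ∑ (2w - 1) = 2 ∑ w - n`, i.e. `∑ w = n`,
which forces every team to win exactly once.
-/

open Finset

inductive MatchResult : Type
  | homeWin : MatchResult
  | draw : MatchResult
  | awayWin : MatchResult
  deriving DecidableEq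

instance : Fintype MatchResult :=
  ⟨{.homeWin, .draw, .awayWin}, fun x => by cases x <;> simp⟩

/-- A league outcome: a result for each ordered pair of distinct teams
(the first component is the home team). -/
abbrev LeagueOutcome (n : ℕ) : Type :=
  {p : Fin n × Fin n // p.1 ≠ p.2} → MatchResult

/-- Points earned by the home team. -/
def homePts : MatchResult → ℕ
  | .homeWin => 3
  | .draw => 1
  | .awayWin => 0

/-- Points earned by the away team. -/
def awayPts : MatchResult → ℕ
  | .homeWin => 0
  | .draw => 1
  | .awayWin => 3

/-- Total points of team `i`: sum over all matches of the points `i` earns in them. -/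
def totalPoints {n : ℕ} (r : LeagueOutcome n) (i : Fin n) : ℕ :=
  ∑ m : {p : Fin n × Fin n // p.1 ≠ p.2},
    ((if m.val.1 = i then homePts (r m) else 0) +
     (if m.val.2 = i then awayPts (r m) else 0))

/-- Total points the other teams earn in their matches against team `i`. -/
def oppPoints {n : ℕ} (r : LeagueOutcome n) (i : Fin n) : ℕ :=
  ∑ m : {p : Fin n × Fin n // p.1 ≠ p.2},
    ((if m.val.1 = i then awayPts (r m) else 0) +
     (if m.val.2 = i then homePts (r m) else 0))

/-- Number of matches that team `i` wins. -/
def wins {n : ℕ} (r : LeagueOutcome n) (i : Fin n) : ℕ :=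
  (Finset.univ.filter (fun m : {p : Fin n × Fin n // p.1 ≠ p.2} =>
    (m.val.1 = i ∧ r m = .homeWin) ∨ (m.val.2 = i ∧ r m = .awayWin))).card

/-- Number of matches that team `i` draws. -/
def draws {n : ℕ} (r : LeagueOutcome n) (i : Fin n) : ℕ :=
  (Finset.univ.filter (fun m : {p : Fin n × Fin n // p.1 ≠ p.2} =>
    (m.val.1 = i ∨ m.val.2 = i) ∧ r m = .draw)).card

/-- Number of matches that team `i` loses. -/
def losses {n : ℕ} (r : LeagueOutcome n) (i : Fin n) : ℕ :=
  (Finset.univ.filter (fun m : {p : Fin n × Fin n // p.1 ≠ p.2} =>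
    (m.val.1 = i ∧ r m = .awayWin) ∨ (m.val.2 = i ∧ r m = .homeWin))).card

section

variable {n : ℕ}

theorem totalPoints_eq (r : LeagueOutcome n) (i : Fin n) :
    totalPoints r i = 3 * wins r i + draws r i := by
  simp only [totalPoints, wins, draws, card_filter, mul_sum, ← sum_add_distrib]
  refine sum_congr rfl fun ⟨⟨a, b⟩, (hab : a ≠ b)⟩ _ => ?_
  have not_both : ¬(a = i ∧ b = i) := fun ⟨ha, hb⟩ => hab (ha.trans hb.symm)
  rcases r ⟨(a, b), hab⟩ <;> by_cases ha : a = i <;> by_cases hb : b = i <;>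
    simp_all [homePts, awayPts]

theorem card_home_matches (i : Fin n) :
    #{m : {p : Fin n × Fin n // p.1 ≠ p.2} | m.1.1 = i} = n - 1 := by
  rw [← Fintype.card_subtype]
  calc _ = Fintype.card {j // j ≠ i} := Fintype.card_congr
          { toFun := fun m => ⟨m.1.1.2, fun h => m.1.2 (m.2.trans h.symm)⟩
            invFun := fun j => ⟨⟨(i, j.1), fun h => j.2 h.symm⟩, rfl⟩
            left_inv := by rintro ⟨⟨⟨a, b⟩, hab⟩, rfl⟩; rfl
            right_inv := fun j => rfl }
    _ = n - 1 := by simp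

theorem card_away_matches (i : Fin n) :
    #{m : {p : Fin n × Fin n // p.1 ≠ p.2} | m.1.2 = i} = n - 1 := by
  rw [← Fintype.card_subtype]
  calc _ = Fintype.card {j // j ≠ i} := Fintype.card_congr
          { toFun := fun m => ⟨m.1.1.1, fun h => m.1.2 (h.trans m.2.symm)⟩
            invFun := fun j => ⟨⟨(j.1, i), j.2⟩, rfl⟩
            left_inv := by rintro ⟨⟨⟨a, b⟩, hab⟩, rfl⟩; rfl
            right_inv := fun j => rfl }
    _ = n - 1 := by simp

theorem wins_add_draws_add_losses (r : LeagueOutcome n) (i : Fin n) :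
    wins r i + draws r i + losses r i = 2 * (n - 1) := by
  suffices wins r i + draws r i + losses r i =
      #{m : {p : Fin n × Fin n // p.1 ≠ p.2} | m.1.1 = i} +
        #{m : {p : Fin n × Fin n // p.1 ≠ p.2} | m.1.2 = i} by
    rw [this, card_home_matches, card_away_matches, two_mul]
  simp only [wins, draws, losses, card_filter, ← sum_add_distrib]
  refine sum_congr rfl fun ⟨⟨a, b⟩, (hab : a ≠ b)⟩ _ => ?_
  have not_both : ¬(a = i ∧ b = i) := fun ⟨ha, hb⟩ => hab (ha.trans hb.symm)
  rcases r ⟨(a, b), hab⟩ <;> by_cases ha : a = i <;> by_cases hb : b = i <;>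
    simp_all

theorem sum_wins_eq_sum_losses (r : LeagueOutcome n) :
    ∑ i, wins r i = ∑ i, losses r i := by
  simp only [wins, losses, card_filter]
  rw [sum_comm]
  conv_rhs => rw [sum_comm]
  refine sum_congr rfl fun m _ => ?_
  rcases r m <;> simp

end

theorem tied_two_n_sub_one_general (n : ℕ) (r : LeagueOutcome n)
    (h : ∀ i, totalPoints r i = 2 * n - 1) :
    ∀ i, wins r i = 1 ∧ losses r i = 1 ∧ draws r i = 2 * n - 4 := by
  have losses_add_one : ∀ i, losses r i + 1 = 2 * wins r i := fun i => by
    have := totalPoints_eq r i ▸ h i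
    have := wins_add_draws_add_losses r i
    have := i.pos
    omega
  have sum_wins : ∑ i, wins r i = n := by
    have := sum_congr rfl fun i (_ : i ∈ univ) => losses_add_one i
    rw [sum_add_distrib, ← mul_sum, ← sum_wins_eq_sum_losses] at this
    simp only [sum_const, card_univ, Fintype.card_fin, smul_eq_mul, mul_one] at this
    omega
  have one_le_wins : ∀ i ∈ univ, 1 ≤ wins r i := fun i _ => by
    have := losses_add_one i
    omega
  have wins_eq_one : ∀ i, wins r i = 1 := fun i =>
    ((sum_eq_sum_iff_of_le one_le_wins).mp (by simp [sum_wins]) i (mem_univ i)).symm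
  intro i
  have := losses_add_one i
  have := wins_add_draws_add_losses r i
  have := wins_eq_one i
  omega

/-- in a league tied with common score `2n−1`, every team has exactly
1 victory, 1 defeat and `2n−4` draws. -/
theorem tied_two_n_sub_one (n : ℕ) (hn : 2 ≤ n) (r : LeagueOutcome n)
    (h : ∀ i, totalPoints r i = 2 * n - 1) :
    ∀ i, wins r i = 1 ∧ losses r i = 1 ∧ draws r i = 2 * n - 4 :=
  tied_two_n_sub_one_general n r h
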